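/- If the formal triangular matrix ideal [[I,0,0],[A21,J,0],[A31,A32,K]] is a weakly clean ideal of the 3×3 lower triangular formal matrix ring T = [[A1,0,0],[A21,A2,0],[A31,A32,A3]], then I, J, K are weakly clean ideals of A1, A2, A3 respectively. -/

import Mathlib

set_option maxHeartbeats 1600000

section Tri3
variable (A1 A2 A3 A21 A31 A32 : Type*) [Ring A1] [Ring A2] [Ring A3]
  [AddCommGroup A21] [AddCommGroup A31] [AddCommGroup A32]
  [Module A2 A21] [Module A1ᵐᵒᵖ A21] [SMulCommClass A2 A1ᵐᵒᵖ A21]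
  [Module A3 A31] [Module A1ᵐᵒᵖ A31] [SMulCommClass A3 A1ᵐᵒᵖ A31]
  [Module A3 A32] [Module A2ᵐᵒᵖ A32] [SMulCommClass A3 A2ᵐᵒᵖ A32]

/-- A connecting (A3,A1)-bilinear pairing φ : A32 ⊗_{A2} A21 → A31, making the
formal 3×3 lower triangular matrices into a ring. -/
class MoritaPairing : Type _ where
  pair : A32 → A21 → A31
  pair_add_left : ∀ x x' y, pair (x + x') y = pair x y + pair x' y
  pair_add_right : ∀ x y y', pair x (y + y') = pair x y + pair x y'
  pair_smul_left : ∀ (a : A3) x y, pair (a • x) y = a • pair x y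
  pair_smul_right : ∀ (a : A1ᵐᵒᵖ) x y, pair x (a • y) = a • pair x y
  pair_middle : ∀ (a : A2) x y, pair (MulOpposite.op a • x) y = pair x (a • y)

variable [MoritaPairing A1 A2 A3 A21 A31 A32]

open MoritaPairing MulOpposite

local notation "π" => MoritaPairing.pair (A1 := A1) (A2 := A2) (A3 := A3)
  (A21 := A21) (A31 := A31) (A32 := A32)

/-- The formal lower triangular matrix ring
T = [[A1,0,0],[A21,A2,0],[A31,A32,A3]].  An element is the tuple
(a1, a21, a31, a2, a32, a3) of its entries. -/
abbrev Tri3 := A1 × A21 × A31 × A2 × A32 × A3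

namespace Tri3
variable {A1 A2 A3 A21 A31 A32}

@[simp] theorem pair_zero_left (y : A21) : π (0 : A32) y = (0 : A31) := by
  have h : π (0 : A32) y = π 0 y + π 0 y := by
    simpa using pair_add_left (A1 := A1) (A2 := A2) (A3 := A3) (A21 := A21) (A31 := A31) (A32 := A32) (0 : A32) (0 : A32) y
  exact left_eq_add.mp h

@[simp] theorem pair_zero_right (x : A32) : π x (0 : A21) = (0 : A31) := by
  have h : π x (0 : A21) = π x 0 + π x 0 := by
    simpa using pair_add_right (A1 := A1) (A2 := A2) (A3 := A3) (A21 := A21) (A31 := A31) (A32 := A32) x (0 : A21) (0 : A21)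
  exact left_eq_add.mp h

instance : Mul (Tri3 A1 A2 A3 A21 A31 A32) :=
  ⟨fun x y =>
    (x.1 * y.1,
     op y.1 • x.2.1 + x.2.2.2.1 • y.2.1,
     op y.1 • x.2.2.1 + π x.2.2.2.2.1 y.2.1 + x.2.2.2.2.2 • y.2.2.1,
     x.2.2.2.1 * y.2.2.2.1,
     op y.2.2.2.1 • x.2.2.2.2.1 + x.2.2.2.2.2 • y.2.2.2.2.1,
     x.2.2.2.2.2 * y.2.2.2.2.2)⟩

instance : One (Tri3 A1 A2 A3 A21 A31 A32) := ⟨(1, 0, 0, 1, 0, 1)⟩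

theorem mul_def (x y : Tri3 A1 A2 A3 A21 A31 A32) :
    x * y =
      (x.1 * y.1,
       op y.1 • x.2.1 + x.2.2.2.1 • y.2.1,
       op y.1 • x.2.2.1 + π x.2.2.2.2.1 y.2.1 + x.2.2.2.2.2 • y.2.2.1,
       x.2.2.2.1 * y.2.2.2.1,
       op y.2.2.2.1 • x.2.2.2.2.1 + x.2.2.2.2.2 • y.2.2.2.2.1,
       x.2.2.2.2.2 * y.2.2.2.2.2) := rfl

theorem one_def :
    (1 : Tri3 A1 A2 A3 A21 A31 A32) =
      ((1 : A1), (0 : A21), (0 : A31), (1 : A2), (0 : A32), (1 : A3)) := rfl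

instance instRing : Ring (Tri3 A1 A2 A3 A21 A31 A32) where
  __ := (inferInstance : AddCommGroup (Tri3 A1 A2 A3 A21 A31 A32))
  left_distrib x y z := by
    refine Prod.ext ?_ (Prod.ext ?_ (Prod.ext ?_ (Prod.ext ?_ (Prod.ext ?_ ?_)))) <;>
      simp [mul_def, mul_add, smul_add, add_smul, pair_add_right] <;> abel
  right_distrib x y z := by
    refine Prod.ext ?_ (Prod.ext ?_ (Prod.ext ?_ (Prod.ext ?_ (Prod.ext ?_ ?_)))) <;>
      simp [mul_def, add_mul, add_smul, smul_add, pair_add_left] <;> abel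
  zero_mul x := by
    refine Prod.ext ?_ (Prod.ext ?_ (Prod.ext ?_ (Prod.ext ?_ (Prod.ext ?_ ?_)))) <;>
      simp [mul_def]
  mul_zero x := by
    refine Prod.ext ?_ (Prod.ext ?_ (Prod.ext ?_ (Prod.ext ?_ (Prod.ext ?_ ?_)))) <;>
      simp [mul_def]
  mul_assoc x y z := by
    refine Prod.ext ?_ (Prod.ext ?_ (Prod.ext ?_ (Prod.ext ?_ (Prod.ext ?_ ?_)))) <;>
      simp [mul_def, mul_assoc, smul_add, mul_smul, MulOpposite.op_mul, smul_comm,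
        pair_add_left, pair_add_right, pair_smul_left, pair_smul_right, pair_middle] <;>
      abel
  one_mul x := by
    refine Prod.ext ?_ (Prod.ext ?_ (Prod.ext ?_ (Prod.ext ?_ (Prod.ext ?_ ?_)))) <;>
      simp [mul_def, one_def]
  mul_one x := by
    refine Prod.ext ?_ (Prod.ext ?_ (Prod.ext ?_ (Prod.ext ?_ (Prod.ext ?_ ?_)))) <;>
      simp [mul_def, one_def]

end Tri3
end Tri3

def IsWeaklyClean {R : Type*} [Ring R] (x : R) : Prop :=
  ∃ (u : Rˣ) (e : R), IsIdempotentElem e ∧ (x = ↑u + e ∨ x = ↑u - e)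

theorem IsWeaklyClean.map {R S : Type*} [Ring R] [Ring S] (f : R →+* S) {x : R}
    (hx : IsWeaklyClean x) : IsWeaklyClean (f x) := by
  obtain ⟨u, e, he, hx⟩ := hx
  refine ⟨Units.map f u, f e, he.map f, ?_⟩
  rcases hx with rfl | rfl
  · exact Or.inl (map_add f _ _)
  · exact Or.inr (map_sub f _ _)

namespace Tri3

variable {A1 A2 A3 A21 A31 A32 : Type*} [Ring A1] [Ring A2] [Ring A3]
    [AddCommGroup A21] [AddCommGroup A31] [AddCommGroup A32]
    [Module A2 A21] [Module A1ᵐᵒᵖ A21] [SMulCommClass A2 A1ᵐᵒᵖ A21]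
    [Module A3 A31] [Module A1ᵐᵒᵖ A31] [SMulCommClass A3 A1ᵐᵒᵖ A31]
    [Module A3 A32] [Module A2ᵐᵒᵖ A32] [SMulCommClass A3 A2ᵐᵒᵖ A32]
    [MoritaPairing A1 A2 A3 A21 A31 A32]

def diag₁ : Tri3 A1 A2 A3 A21 A31 A32 →+* A1 where
  toFun x := x.1
  map_one' := rfl
  map_mul' _ _ := rfl
  map_zero' := rfl
  map_add' _ _ := rfl

def diag₂ : Tri3 A1 A2 A3 A21 A31 A32 →+* A2 where
  toFun x := x.2.2.2.1
  map_one' := rfl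
  map_mul' _ _ := rfl
  map_zero' := rfl
  map_add' _ _ := rfl

def diag₃ : Tri3 A1 A2 A3 A21 A31 A32 →+* A3 where
  toFun x := x.2.2.2.2.2
  map_one' := rfl
  map_mul' _ _ := rfl
  map_zero' := rfl
  map_add' _ _ := rfl

end Tri3

/-- If [[I,0,0],[A21,J,0],[A31,A32,K]] is a weakly clean ideal of the formal
triangular matrix ring T = [[A1,0,0],[A21,A2,0],[A31,A32,A3]], then I, J, K are
weakly clean ideals of A1, A2, A3 respectively. -/
theorem stmt13 {A1 A2 A3 A21 A31 A32 : Type*} [Ring A1] [Ring A2] [Ring A3]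
    [AddCommGroup A21] [AddCommGroup A31] [AddCommGroup A32]
    [Module A2 A21] [Module A1ᵐᵒᵖ A21] [SMulCommClass A2 A1ᵐᵒᵖ A21]
    [Module A3 A31] [Module A1ᵐᵒᵖ A31] [SMulCommClass A3 A1ᵐᵒᵖ A31]
    [Module A3 A32] [Module A2ᵐᵒᵖ A32] [SMulCommClass A3 A2ᵐᵒᵖ A32]
    [MoritaPairing A1 A2 A3 A21 A31 A32]
    (I : Ideal A1) (J : Ideal A2) (K : Ideal A3)
    (h : ∀ x : Tri3 A1 A2 A3 A21 A31 A32,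
      x.1 ∈ I → x.2.2.2.1 ∈ J → x.2.2.2.2.2 ∈ K → IsWeaklyClean x) :
    (∀ a ∈ I, IsWeaklyClean a) ∧ (∀ b ∈ J, IsWeaklyClean b) ∧
      (∀ c ∈ K, IsWeaklyClean c) := by
  refine ⟨fun a ha => ?_, fun b hb => ?_, fun c hc => ?_⟩
  · exact (h (a, 0, 0, 0, 0, 0) ha J.zero_mem K.zero_mem).map Tri3.diag₁
  · exact (h (0, 0, 0, b, 0, 0) I.zero_mem hb K.zero_mem).map Tri3.diag₂
  · exact (h (0, 0, 0, 0, 0, c) I.zero_mem J.zero_mem hc).map Tri3.diag₃
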